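/- Let f : ℝ^n → ℝ be convex, differentiable, and L-smooth, let Ω ⊆ ℝ^n be a nonempty compact convex set of diameter at most D, let x* ∈ Ω minimize f over Ω, and fix δ > 0. Suppose w ∈ Ω, γ ∈ (0, 1], g ∈ ℝ^n, and v ∈ Ω satisfies ⟨g, v⟩ ≤ min_{u ∈ Ω} ⟨g, u⟩ + (L D²/2) γ δ. Then the point w⁺ = (1 − γ) w + γ v satisfies f(w⁺) − f(x*) ≤ (1 − γ)(f(w) − f(x*)) + (L D²/2) γ² (1 + δ) + γ D ‖g − ∇f(w)‖. -/

import Mathlib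

/-!
The descent lemma for the `L`-smooth `f` gives
`f w⁺ ≤ f w + γ ⟪∇f w, v - w⟫ + (L / 2) γ² ‖v - w‖²`. In the linear term, trading `∇f w` for `g`
costs at most `D ‖g - ∇f w‖`, the oracle compares `v` with `x*` up to its slack `(L D² / 2) γ δ`,
and the first-order characterization of convexity bounds `⟪∇f w, x* - w⟫` by `f x* - f w`.
-/

open scoped InnerProductSpace
open Set AffineMap

theorem le_add_deriv_add_half_of_deriv_le {φ φ' : ℝ → ℝ} {K : ℝ}
    (hφ : ∀ t ∈ Icc (0 : ℝ) 1, HasDerivAt φ (φ' t) t)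
    (hφ' : ∀ t ∈ Ico (0 : ℝ) 1, φ' t ≤ φ' 0 + K * t) :
    φ 1 ≤ φ 0 + φ' 0 + K / 2 := by
  have hB : ∀ t : ℝ, HasDerivAt (fun t => φ 0 + φ' 0 * t + K / 2 * t ^ 2) (φ' 0 + K * t) t := by
    intro t
    refine ((((hasDerivAt_id' t).const_mul (φ' 0)).const_add (φ 0)).add
      ((hasDerivAt_pow 2 t).const_mul (K / 2))).congr_deriv ?_
    ring
  have := image_le_of_deriv_right_le_deriv_boundary (f := φ) (a := 0) (b := 1)
    (fun t ht => (hφ t ht).continuousAt.continuousWithinAt)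
    (fun t ht => (hφ t (Ico_subset_Icc_self ht)).hasDerivWithinAt)
    (B := fun t => φ 0 + φ' 0 * t + K / 2 * t ^ 2) (by simp)
    (fun t _ => (hB t).continuousAt.continuousWithinAt)
    (fun t _ => (hB t).hasDerivWithinAt) hφ' (right_mem_Icc.2 zero_le_one)
  simpa using this

variable {E : Type*} [NormedAddCommGroup E] [InnerProductSpace ℝ E] [CompleteSpace E]
  {f : E → ℝ}

theorem DifferentiableAt.hasDerivAt_comp_lineMap {x y : E} {t : ℝ}
    (hf : DifferentiableAt ℝ f (lineMap x y t)) :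
    HasDerivAt (f ∘ lineMap x y) ⟪gradient f (lineMap x y t), y - x⟫_ℝ t := by
  rw [inner_gradient_left]
  exact hf.hasFDerivAt.comp_hasDerivAt t hasDerivAt_lineMap

theorem ConvexOn.add_inner_gradient_le {s : Set E} (hf : ConvexOn ℝ s f) {x y : E}
    (hx : x ∈ s) (hy : y ∈ s) (hfx : DifferentiableAt ℝ f x) :
    f x + ⟪gradient f x, y - x⟫_ℝ ≤ f y := by
  have hline : ConvexOn ℝ (lineMap x y ⁻¹' s) (f ∘ lineMap x y) :=
    hf.comp_affineMap (lineMap x y)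
  have hderiv := (lineMap_apply_zero x y (k := ℝ) ▸ hfx).hasDerivAt_comp_lineMap
  have := hline.le_slope_of_hasDerivAt (x := 0) (y := 1) (by simpa using hx) (by simpa using hy)
    zero_lt_one hderiv
  simp only [slope_def_field, Function.comp_apply, lineMap_apply_zero, lineMap_apply_one,
    sub_zero, div_one] at this
  linarith

theorem le_add_inner_gradient_add_sq_of_lipschitz_gradient {L : ℝ} (hf : Differentiable ℝ f)
    (hL : ∀ x y, ‖gradient f x - gradient f y‖ ≤ L * ‖x - y‖) (x y : E) :
    f y ≤ f x + ⟪gradient f x, y - x⟫_ℝ + L / 2 * ‖y - x‖ ^ 2 := by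
  have hbound : ∀ t ∈ Ico (0 : ℝ) 1, ⟪gradient f (lineMap x y t), y - x⟫_ℝ
      ≤ ⟪gradient f (lineMap x y (0 : ℝ)), y - x⟫_ℝ + L * ‖y - x‖ ^ 2 * t := by
    intro t ht
    have hdist : ‖lineMap x y t - x‖ = t * ‖y - x‖ := by
      rw [← dist_eq_norm, dist_lineMap_left, Real.norm_of_nonneg ht.1, dist_comm, dist_eq_norm]
    calc ⟪gradient f (lineMap x y t), y - x⟫_ℝ
        = ⟪gradient f x, y - x⟫_ℝ + ⟪gradient f (lineMap x y t) - gradient f x, y - x⟫_ℝ := by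
          rw [inner_sub_left]; ring
      _ ≤ ⟪gradient f x, y - x⟫_ℝ + L * (t * ‖y - x‖) * ‖y - x‖ := by
          gcongr
          exact (real_inner_le_norm _ _).trans
            (mul_le_mul_of_nonneg_right (hdist ▸ hL _ _) (norm_nonneg _))
      _ = _ := by rw [lineMap_apply_zero]; ring
  have key := le_add_deriv_add_half_of_deriv_le (φ := f ∘ lineMap x y)
    (fun t _ => (hf _).hasDerivAt_comp_lineMap) hbound
  simp only [Function.comp_apply, lineMap_apply_zero, lineMap_apply_one] at key
  linarith

theorem mul_sq_le_mul_sq_of_le {L a b : ℝ} (ha : 0 ≤ a) (hab : a ≤ b) (hLb : 0 ≤ L * b ^ 2) :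
    L * a ^ 2 ≤ L * b ^ 2 := by
  rcases le_or_gt 0 L with hL | hL
  · gcongr
  · nlinarith

theorem frankWolfe_inexact_gradient_step_general {n : ℕ}
    (f : EuclideanSpace ℝ (Fin n) → ℝ) (L : ℝ)
    (hconv : ConvexOn ℝ Set.univ f) (hdiff : Differentiable ℝ f)
    (hsmooth : ∀ x y, ‖gradient f x - gradient f y‖ ≤ L * ‖x - y‖)
    (Ω : Set (EuclideanSpace ℝ (Fin n)))
    (D : ℝ) (hD : ∀ x ∈ Ω, ∀ y ∈ Ω, ‖x - y‖ ≤ D)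
    (xstar : EuclideanSpace ℝ (Fin n)) (hxstarΩ : xstar ∈ Ω)
    (δ : ℝ) (hδ : 0 < δ)
    (w : EuclideanSpace ℝ (Fin n)) (hw : w ∈ Ω)
    (γ : ℝ) (hγ0 : 0 < γ)
    (g : EuclideanSpace ℝ (Fin n))
    (v : EuclideanSpace ℝ (Fin n)) (hv : v ∈ Ω)
    (hvapprox : ∀ u ∈ Ω, ⟪g, v⟫_ℝ ≤ ⟪g, u⟫_ℝ + (L * D ^ 2 / 2) * γ * δ) :
    f ((1 - γ) • w + γ • v) - f xstar ≤
      (1 - γ) * (f w - f xstar) + (L * D ^ 2 / 2) * γ ^ 2 * (1 + δ) +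
        γ * D * ‖g - gradient f w‖ := by
  set e := g - gradient f w
  have hgap : ⟪gradient f w, v - w⟫_ℝ ≤ f xstar - f w + D * ‖e‖ + L * D ^ 2 / 2 * γ * δ := by
    have hfirst := hconv.add_inner_gradient_le (mem_univ w) (mem_univ xstar) (hdiff w)
    have hcs : ⟪e, xstar - v⟫_ℝ ≤ ‖e‖ * D := (real_inner_le_norm _ _).trans
      (mul_le_mul_of_nonneg_left (hD _ hxstarΩ _ hv) (norm_nonneg _))
    calc ⟪gradient f w, v - w⟫_ℝ
        = ⟪gradient f w, xstar - w⟫_ℝ + (⟪g, v⟫_ℝ - ⟪g, xstar⟫_ℝ) + ⟪e, xstar - v⟫_ℝ := by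
          simp only [e, inner_sub_left, inner_sub_right]; ring
      _ ≤ _ := by linarith [hvapprox xstar hxstarΩ]
  -- `L` may be negative; the oracle's slack at `u = v` forces `0 ≤ L * D ^ 2`.
  have hcurv : L * ‖v - w‖ ^ 2 ≤ L * D ^ 2 :=
    mul_sq_le_mul_sq_of_le (norm_nonneg _) (hD v hv w hw) <| by
      nlinarith [hvapprox v hv, mul_pos hγ0 hδ]
  have hdesc := le_add_inner_gradient_add_sq_of_lipschitz_gradient hdiff hsmooth w
    (lineMap w v γ)
  rw [← vsub_eq_sub, lineMap_vsub_left, vsub_eq_sub, inner_smul_right,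
    norm_smul, mul_pow, Real.norm_eq_abs, sq_abs] at hdesc
  rw [← lineMap_apply_module]
  linarith [mul_le_mul_of_nonneg_left hgap hγ0.le, mul_le_mul_of_nonneg_left hcurv (sq_nonneg γ)]

/-- One-step inequality for Frank-Wolfe with an inexact gradient `g` and an
approximate linear-minimization oracle. -/
theorem frankWolfe_inexact_gradient_step {n : ℕ}
    (f : EuclideanSpace ℝ (Fin n) → ℝ) (L : ℝ)
    (hconv : ConvexOn ℝ Set.univ f) (hdiff : Differentiable ℝ f)
    (hsmooth : ∀ x y, ‖gradient f x - gradient f y‖ ≤ L * ‖x - y‖)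
    (Ω : Set (EuclideanSpace ℝ (Fin n))) (hne : Ω.Nonempty)
    (hcomp : IsCompact Ω) (hΩconv : Convex ℝ Ω)
    (D : ℝ) (hD : ∀ x ∈ Ω, ∀ y ∈ Ω, ‖x - y‖ ≤ D)
    (xstar : EuclideanSpace ℝ (Fin n)) (hxstarΩ : xstar ∈ Ω)
    (hmin : ∀ y ∈ Ω, f xstar ≤ f y)
    (δ : ℝ) (hδ : 0 < δ)
    (w : EuclideanSpace ℝ (Fin n)) (hw : w ∈ Ω)
    (γ : ℝ) (hγ0 : 0 < γ) (hγ1 : γ ≤ 1)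
    (g : EuclideanSpace ℝ (Fin n))
    (v : EuclideanSpace ℝ (Fin n)) (hv : v ∈ Ω)
    (hvapprox : ∀ u ∈ Ω, ⟪g, v⟫_ℝ ≤ ⟪g, u⟫_ℝ + (L * D ^ 2 / 2) * γ * δ) :
    f ((1 - γ) • w + γ • v) - f xstar ≤
      (1 - γ) * (f w - f xstar) + (L * D ^ 2 / 2) * γ ^ 2 * (1 + δ) +
        γ * D * ‖g - gradient f w‖ :=
  frankWolfe_inexact_gradient_step_general f L hconv hdiff hsmooth Ω D hD xstar hxstarΩ δ hδ w hw γ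
    hγ0 g v hv hvapprox
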